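/- arXiv:1404.4884 — 2 statements merged into one kernel-verified Lean document; each statement's English description precedes it below -/
import Mathlib

section
/- If P is a 2×2 frequency matrix with ε̂ = (p00·p11 − p01·p10)/(p0*·p1*) satisfying 0 < ε̂ < 1, then the confusion matrix C = (1/(1−ε̂))·(P − ε̂·diag(p0*, p1*)) has nonnegative entries that sum to 1. -/
/-! Subtracting `ε̂` times its row sum from a diagonal entry leaves `p10 · p0* / p1*`
(resp. `p01 · p1* / p0*`), which is nonnegative; and the subtracted mass is
`ε̂ (p0* + p1*) = ε̂`, so dividing by `1 - ε̂` restores total mass `1`. -/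

section FrequencyMatrix

variable {K : Type*} [Field K] {a b c d : K}

theorem sub_det_div_mul_first_row_sum (hab : a + b ≠ 0) (hcd : c + d ≠ 0) :
    a - (a * d - b * c) / ((a + b) * (c + d)) * (a + b) = c * (a + b) / (c + d) := by
  field_simp
  ring

theorem sub_det_div_mul_second_row_sum (hab : a + b ≠ 0) (hcd : c + d ≠ 0) :
    d - (a * d - b * c) / ((a + b) * (c + d)) * (c + d) = b * (c + d) / (a + b) := by
  field_simp
  ring

theorem sub_mul_row_sums_div_one_sub_sum_eq_one {e : K} (hsum : a + b + c + d = 1)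
    (he : 1 - e ≠ 0) :
    (a - e * (a + b)) / (1 - e) + b / (1 - e) + c / (1 - e) + (d - e * (c + d)) / (1 - e) = 1 := by
  rw [← add_div, ← add_div, ← add_div, div_eq_one_iff_eq he]
  linear_combination (1 - e) * hsum

end FrequencyMatrix

theorem confusion_is_frequency_matrix_general (p00 p01 p10 p11 : ℝ)
    (h01 : 0 ≤ p01) (h10 : 0 ≤ p10)
    (hsum : p00 + p01 + p10 + p11 = 1)
    (hr0 : 0 < p00 + p01) (hr1 : 0 < p10 + p11)
    (eps : ℝ)
    (heps : eps = (p00 * p11 - p01 * p10) / ((p00 + p01) * (p10 + p11)))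
    (heps1 : eps < 1) :
    0 ≤ (p00 - eps * (p00 + p01)) / (1 - eps) ∧
    0 ≤ p01 / (1 - eps) ∧
    0 ≤ p10 / (1 - eps) ∧
    0 ≤ (p11 - eps * (p10 + p11)) / (1 - eps) ∧
    (p00 - eps * (p00 + p01)) / (1 - eps) + p01 / (1 - eps) +
      p10 / (1 - eps) + (p11 - eps * (p10 + p11)) / (1 - eps) = 1 := by
  have hd : 0 < 1 - eps := sub_pos.mpr heps1
  have hdiag0 : p00 - eps * (p00 + p01) = p10 * (p00 + p01) / (p10 + p11) := by
    rw [heps, sub_det_div_mul_first_row_sum hr0.ne' hr1.ne']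
  have hdiag1 : p11 - eps * (p10 + p11) = p01 * (p10 + p11) / (p00 + p01) := by
    rw [heps, sub_det_div_mul_second_row_sum hr0.ne' hr1.ne']
  refine ⟨div_nonneg ?_ hd.le, div_nonneg h01 hd.le, div_nonneg h10 hd.le,
    div_nonneg ?_ hd.le, sub_mul_row_sums_div_one_sub_sum_eq_one hsum hd.ne'⟩
  · rw [hdiag0]
    exact div_nonneg (mul_nonneg h10 hr0.le) hr1.le
  · rw [hdiag1]
    exact div_nonneg (mul_nonneg h01 hr1.le) hr0.le

theorem confusion_is_frequency_matrix (p00 p01 p10 p11 : ℝ)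
    (h00 : 0 ≤ p00) (h01 : 0 ≤ p01) (h10 : 0 ≤ p10) (h11 : 0 ≤ p11)
    (hsum : p00 + p01 + p10 + p11 = 1)
    (hr0 : 0 < p00 + p01) (hr1 : 0 < p10 + p11)
    (eps : ℝ)
    (heps : eps = (p00 * p11 - p01 * p10) / ((p00 + p01) * (p10 + p11)))
    (heps0 : 0 < eps) (heps1 : eps < 1) :
    0 ≤ (p00 - eps * (p00 + p01)) / (1 - eps) ∧
    0 ≤ p01 / (1 - eps) ∧
    0 ≤ p10 / (1 - eps) ∧
    0 ≤ (p11 - eps * (p10 + p11)) / (1 - eps) ∧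
    (p00 - eps * (p00 + p01)) / (1 - eps) + p01 / (1 - eps) +
      p10 / (1 - eps) + (p11 - eps * (p10 + p11)) / (1 - eps) = 1 :=
  confusion_is_frequency_matrix_general p00 p01 p10 p11 h01 h10 hsum hr0 hr1 eps heps heps1
end

section
/- In the Maximum Cause epistemology with ε0 = r00 − √(r01·r10) and ε1 = r11 − √(r01·r10), the corresponding confusion distribution is σ0 = √r10/(√r01 + √r10) and σ1 = √r01/(√r01 + √r10), i.e., these σ values satisfy ε0 = 1 − r01/σ1 and ε1 = 1 − r10/σ0. -/
open Real

theorem div_sqrt_div_sqrt_add_sqrt {p : ℝ} (hp : 0 ≤ p) (q : ℝ) :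
    p / (√p / (√p + √q)) = p + √(p * q) := by
  rw [div_div_eq_mul_div, mul_div_right_comm, div_sqrt, mul_add, mul_self_sqrt hp,
    sqrt_mul hp]

theorem maximum_cause_sigma_general (r00 r01 r10 r11 : ℝ)
    (h01 : 0 < r01) (h10 : 0 < r10)
    (hrow0 : r00 + r01 = 1) (hrow1 : r10 + r11 = 1)
    (s0 s1 : ℝ)
    (hs0 : s0 = Real.sqrt r10 / (Real.sqrt r01 + Real.sqrt r10))
    (hs1 : s1 = Real.sqrt r01 / (Real.sqrt r01 + Real.sqrt r10)) :
    r00 - Real.sqrt (r01 * r10) = 1 - r01 / s1 ∧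
    r11 - Real.sqrt (r01 * r10) = 1 - r10 / s0 := by
  subst hs0 hs1
  constructor
  · rw [div_sqrt_div_sqrt_add_sqrt h01.le]
    linarith
  · rw [add_comm √r01, div_sqrt_div_sqrt_add_sqrt h10.le, mul_comm r10]
    linarith

theorem maximum_cause_sigma (r00 r01 r10 r11 : ℝ)
    (h00 : 0 < r00) (h01 : 0 < r01) (h10 : 0 < r10) (h11 : 0 < r11)
    (hrow0 : r00 + r01 = 1) (hrow1 : r10 + r11 = 1)
    (hdet : 0 < r00 * r11 - r01 * r10)
    (s0 s1 : ℝ)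
    (hs0 : s0 = Real.sqrt r10 / (Real.sqrt r01 + Real.sqrt r10))
    (hs1 : s1 = Real.sqrt r01 / (Real.sqrt r01 + Real.sqrt r10)) :
    r00 - Real.sqrt (r01 * r10) = 1 - r01 / s1 ∧
    r11 - Real.sqrt (r01 * r10) = 1 - r10 / s0 :=
  maximum_cause_sigma_general r00 r01 r10 r11 h01 h10 hrow0 hrow1 s0 s1 hs0 hs1
end
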